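/- Let α, β be positive real affine roots with ℓ(s_α)=2ht(α∨)−1 and ℓ(s_β)=2ht(β∨)−1, ℓ(s_α s_β) = ℓ(s_α) + ℓ(s_β), and let γ be a positive real root with γ∨ = α∨ + β∨. Then ℓ(s_γ) = 2ht(γ∨) − 1 if and only if ⟨α, β∨⟩ ≠ 0. -/

import Mathlib

/-!
For a positive root `α ≠ α_i` with `c := ⟨α_i, α∨⟩ ≥ 1` (equivalently, `i` a right descent of
`s_α`), the root `s_i α` is positive, `ℓ(s_{s_i α}) = ℓ(s_α) - 2` and
`ht((s_i α)∨) = ht(α∨) - c`. Descending to a simple root gives `ℓ(s_α) ≤ 2 ht(α∨) - 1` for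
every positive root, so on a Chevalley root every such descent has `c = 1`.

If `⟨α, β∨⟩ = 0` then `⟨α, γ∨⟩ = ⟨β, γ∨⟩ = 2`. Were `s_α γ` positive, `s_γ = s_α s_{s_α γ} s_α`
would give `ℓ(s_γ) ≤ 2 ht(γ∨) - 3`; hence `s_α γ` and `s_β γ` are negative roots, with coroots
`β∨ - α∨` and `α∨ - β∨`, so `α∨ = β∨`, `α = β` and `ℓ(s_α s_β) = 0`, which is absurd.

If `⟨α, β∨⟩ ≠ 0`, take a right descent `i` of `s_γ`. Since `ℓ(s_α s_β) = ℓ(s_α) + ℓ(s_β)`, it is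
a descent of exactly one of `s_α`, `s_β`, say `s_α`. If `α = α_i` then `s_i γ = β`; otherwise
`⟨α_i, α∨⟩ = 1`, `⟨α_i, β∨⟩ = 0`, and `(s_i α, β, s_i γ)` satisfies the same hypotheses with
`ℓ(s_α) + ℓ(s_β)` smaller by two. Either way `⟨α_i, γ∨⟩ = 1` and `γ` is Chevalley iff `s_i γ` is.
-/

/-- Elements of the affine root lattice (resp. affine coroot lattice) of the affine
(untwisted) Kac–Moody root system, written in coordinates with respect to the simple
roots `α_0, …, α_n` (resp. the simple coroots `α_0∨, …, α_n∨`).  The dominance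
(partial) order `a ≤ b` (meaning `b - a` is a nonnegative combination of the simple
roots/coroots) is the coordinatewise order. -/
abbrev AffLat (n : ℕ) := Fin (n + 1) → ℤ

/-- The `i`-th simple root (resp. simple coroot) as a coordinate vector. -/
def simpleVec {n : ℕ} (i : Fin (n + 1)) : AffLat n := Pi.single i 1

/-- The height of a root (resp. coroot): the sum of its coordinates in the basis of
simple roots (resp. simple coroots). -/
def htv {n : ℕ} (a : AffLat n) : ℤ := ∑ j, a j

/-- `a` is a simple root (a standard basis vector). -/
def IsSimpleVec {n : ℕ} (a : AffLat n) : Prop := ∃ i, a = simpleVec i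

/-- Axiomatization of the affine (untwisted) Kac–Moody root system attached to a
finite simple Lie algebra, together with its affine Weyl group `W` (a Coxeter group
with simple reflections `s_0, …, s_n`), its action on the root and coroot lattices,
the coroot map `α ↦ α∨` on real roots, the reflection map `α ↦ s_α`, and the
imaginary coroot `c = α_0∨ + θ∨`. -/
structure AffineRootSystem (n : ℕ) (W : Type*) [Group W] where
  /-- the affine Cartan matrix: `cartan i j = ⟨α_j, α_i∨⟩` -/
  cartan : Fin (n + 1) → Fin (n + 1) → ℤ
  cartan_diag : ∀ i, cartan i i = 2
  cartan_offdiag : ∀ i j, i ≠ j → cartan i j ≤ 0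
  cartan_symm_zero : ∀ i j, cartan i j = 0 → cartan j i = 0
  /-- the Coxeter matrix of the affine Weyl group -/
  M : CoxeterMatrix (Fin (n + 1))
  /-- the affine Weyl group, as a Coxeter system with simple reflections
  `cs.simple 0, …, cs.simple n` and Coxeter length `cs.length` -/
  cs : CoxeterSystem M W
  /-- the action of the affine Weyl group on the root lattice -/
  actR : W → AffLat n → AffLat n
  actR_one : ∀ a, actR 1 a = a
  actR_mul : ∀ u v a, actR (u * v) a = actR u (actR v a)
  actR_add : ∀ w a b, actR w (a + b) = actR w a + actR w b
  actR_simple : ∀ i a, actR (cs.simple i) a = a - (∑ k, cartan i k * a k) • simpleVec i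
  /-- the action of the affine Weyl group on the coroot lattice -/
  actC : W → AffLat n → AffLat n
  actC_one : ∀ b, actC 1 b = b
  actC_mul : ∀ u v b, actC (u * v) b = actC u (actC v b)
  actC_add : ∀ w a b, actC w (a + b) = actC w a + actC w b
  actC_simple : ∀ i b, actC (cs.simple i) b = b - (∑ k, cartan k i * b k) • simpleVec i
  /-- the coroot `α∨` of a real root `α` -/
  coroot : AffLat n → AffLat n
  coroot_simple : ∀ i, coroot (simpleVec i) = simpleVec i
  coroot_act : ∀ w a, coroot (actR w a) = actC w (coroot a)
  /-- the reflection `s_α ∈ W` of a real root `α` -/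
  refl : AffLat n → W
  refl_simple : ∀ i, refl (simpleVec i) = cs.simple i
  refl_act : ∀ w a, refl (actR w a) = w * refl a * w⁻¹
  /-- the coordinates of the imaginary coroot `c = α_0∨ + θ∨` in the basis of simple
  coroots; thus `imag 0 = 1` and `imag i = m_i` for `i ≥ 1`, where
  `θ∨ = m_1 α_1∨ + ⋯ + m_n α_n∨` -/
  imag : AffLat n
  imag_zero : imag 0 = 1
  imag_pos : ∀ i, 1 ≤ imag i
  imag_invariant : ∀ w, actC w imag = imag
  /-- the standard relation between lengths and positivity of roots:
  `ℓ(w s_α) < ℓ(w)` iff `w(α) < 0` -/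
  length_refl_lt_iff : ∀ a : AffLat n, (∃ w i, a = actR w (simpleVec i)) → 0 ≤ a →
    ∀ w : W, cs.length (w * refl a) < cs.length w ↔ actR w a ≤ 0

namespace AffineRootSystem

variable {n : ℕ} {W : Type*} [Group W] (R : AffineRootSystem n W)

/-- `α` is a positive real root of the affine root system. -/
def IsPosRoot (a : AffLat n) : Prop := (∃ w i, a = R.actR w (simpleVec i)) ∧ 0 ≤ a

/-- The evaluation pairing `⟨α, β∨⟩` of a root `α` (coordinates w.r.t. the simple
roots) against a coroot `β∨` (coordinates w.r.t. the simple coroots), computed via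
the affine Cartan matrix `cartan i k = ⟨α_k, α_i∨⟩`. -/
def pairing (a b : AffLat n) : ℤ := ∑ i, ∑ k, b i * (R.cartan i k * a k)

/-- `α` belongs to the set `Π̃` of positive real roots with `ℓ(s_α) = 2 ht(α∨) - 1`
(the roots appearing in the affine quantum Chevalley formula). -/
def IsChevalleyRoot (a : AffLat n) : Prop :=
  R.IsPosRoot a ∧ (R.cs.length (R.refl a) : ℤ) = 2 * htv (R.coroot a) - 1

end AffineRootSystem

namespace CoxeterSystem

variable {B W : Type*} [Group W] {M : CoxeterMatrix B} (cs : CoxeterSystem M W)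

theorem length_mul_mul_le (u v w : W) :
    cs.length (u * v * w) ≤ cs.length u + cs.length v + cs.length w :=
  (cs.length_mul_le _ _).trans (by grw [cs.length_mul_le u v])

theorem length_le_length_simple_mul_mul_simple_add_two (w : W) (i : B) :
    cs.length w ≤ cs.length (cs.simple i * w * cs.simple i) + 2 := by
  have h := cs.length_mul_mul_le (cs.simple i) (cs.simple i * w * cs.simple i) (cs.simple i)
  rw [show cs.simple i * (cs.simple i * w * cs.simple i) * cs.simple i = w by
    simp [mul_assoc], length_simple] at h
  omega

theorem length_mul_lt_of_isRightDescent_of_isLeftDescent {u v : W} {i : B}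
    (hu : cs.IsRightDescent u i) (hv : cs.IsLeftDescent v i) :
    cs.length (u * v) < cs.length u + cs.length v := by
  have h := cs.length_mul_le (u * cs.simple i) (cs.simple i * v)
  rw [mul_assoc, simple_mul_simple_cancel_left] at h
  exact h.trans_lt (add_lt_add hu hv)

theorem IsReflection.isLeftDescent_iff {t : W} (ht : cs.IsReflection t) {i : B} :
    cs.IsLeftDescent t i ↔ cs.IsRightDescent t i := by
  rw [← cs.isLeftDescent_inv_iff, ht.inv]

end CoxeterSystem

lemma simpleVec_nonneg {n : ℕ} (i : Fin (n + 1)) : 0 ≤ simpleVec i :=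
  Pi.single_nonneg.mpr zero_le_one

lemma simpleVec_apply_self {n : ℕ} (i : Fin (n + 1)) : simpleVec i i = 1 :=
  Pi.single_eq_same i 1

lemma simpleVec_apply_of_ne {n : ℕ} {i j : Fin (n + 1)} (h : j ≠ i) : simpleVec i j = 0 :=
  Pi.single_eq_of_ne h 1

lemma htv_add {n : ℕ} (a b : AffLat n) : htv (a + b) = htv a + htv b :=
  Finset.sum_add_distrib

lemma htv_sub {n : ℕ} (a b : AffLat n) : htv (a - b) = htv a - htv b :=
  Finset.sum_sub_distrib _ _

lemma htv_smul {n : ℕ} (z : ℤ) (a : AffLat n) : htv (z • a) = z * htv a := by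
  simp [htv, Finset.mul_sum]

lemma htv_simpleVec {n : ℕ} (i : Fin (n + 1)) : htv (simpleVec i) = 1 := by
  simp [htv, simpleVec]

namespace AffineRootSystem

variable {n : ℕ} {W : Type*} [Group W] (R : AffineRootSystem n W)

section Pairing

open Matrix

lemma pairing_eq_dotProduct (a b : AffLat n) : R.pairing a b = b ⬝ᵥ (of R.cartan *ᵥ a) := by
  simp [pairing, dotProduct, mulVec, Finset.mul_sum]

lemma pairing_add_right (a b b' : AffLat n) :
    R.pairing a (b + b') = R.pairing a b + R.pairing a b' := by
  simp [pairing_eq_dotProduct, add_dotProduct]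

lemma pairing_sub_left (a a' b : AffLat n) :
    R.pairing (a - a') b = R.pairing a b - R.pairing a' b := by
  simp [pairing_eq_dotProduct, mulVec_sub]

lemma pairing_sub_right (a b b' : AffLat n) :
    R.pairing a (b - b') = R.pairing a b - R.pairing a b' := by
  simp [pairing_eq_dotProduct, sub_dotProduct]

lemma pairing_smul_left (z : ℤ) (a b : AffLat n) :
    R.pairing (z • a) b = z * R.pairing a b := by
  rw [pairing_eq_dotProduct, mulVec_smul, dotProduct_smul, smul_eq_mul, pairing_eq_dotProduct]

lemma pairing_smul_right (z : ℤ) (a b : AffLat n) :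
    R.pairing a (z • b) = z * R.pairing a b := by
  rw [pairing_eq_dotProduct, smul_dotProduct, smul_eq_mul, pairing_eq_dotProduct]

lemma pairing_zero_right (a : AffLat n) : R.pairing a 0 = 0 := by
  simp [pairing_eq_dotProduct]

lemma pairing_simpleVec_simpleVec (i : Fin (n + 1)) :
    R.pairing (simpleVec i) (simpleVec i) = 2 := by
  simp [pairing_eq_dotProduct, simpleVec, R.cartan_diag]

lemma actR_simple_eq (i : Fin (n + 1)) (a : AffLat n) :
    R.actR (R.cs.simple i) a = a - R.pairing a (simpleVec i) • simpleVec i := by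
  rw [R.actR_simple, pairing_eq_dotProduct, simpleVec, single_dotProduct, one_mul]
  rfl

lemma actC_simple_eq (i : Fin (n + 1)) (b : AffLat n) :
    R.actC (R.cs.simple i) b = b - R.pairing (simpleVec i) b • simpleVec i := by
  simp only [R.actC_simple, pairing_eq_dotProduct, simpleVec, mulVec_single_one, dotProduct,
    col_apply, of_apply, mul_comm]

end Pairing

lemma pairing_act (w : W) (a b : AffLat n) :
    R.pairing (R.actR w a) (R.actC w b) = R.pairing a b := by
  induction w using R.cs.simple_induction generalizing a b with
  | simple i =>
    rw [R.actR_simple_eq, R.actC_simple_eq, R.pairing_sub_left, R.pairing_sub_right,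
      R.pairing_sub_right, R.pairing_smul_left, R.pairing_smul_right, R.pairing_smul_right,
      R.pairing_smul_left, R.pairing_simpleVec_simpleVec]
    ring
  | one => rw [R.actR_one, R.actC_one]
  | mul u v hu hv => rw [R.actR_mul, R.actC_mul, hu, hv]

def actRHom (w : W) : AffLat n →+ AffLat n := AddMonoidHom.mk' (R.actR w) (R.actR_add w)

def actCHom (w : W) : AffLat n →+ AffLat n := AddMonoidHom.mk' (R.actC w) (R.actC_add w)

lemma actR_neg (w : W) (a : AffLat n) : R.actR w (-a) = -R.actR w a :=
  (R.actRHom w).map_neg a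

lemma actR_sub (w : W) (a b : AffLat n) : R.actR w (a - b) = R.actR w a - R.actR w b :=
  (R.actRHom w).map_sub a b

lemma actR_zsmul (w : W) (z : ℤ) (a : AffLat n) : R.actR w (z • a) = z • R.actR w a :=
  (R.actRHom w).map_zsmul z a

lemma actC_neg (w : W) (b : AffLat n) : R.actC w (-b) = -R.actC w b :=
  (R.actCHom w).map_neg b

lemma actC_sub (w : W) (a b : AffLat n) : R.actC w (a - b) = R.actC w a - R.actC w b :=
  (R.actCHom w).map_sub a b

lemma actC_zsmul (w : W) (z : ℤ) (a : AffLat n) : R.actC w (z • a) = z • R.actC w a :=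
  (R.actCHom w).map_zsmul z a

lemma actR_inv_actR (w : W) (a : AffLat n) : R.actR w⁻¹ (R.actR w a) = a := by
  rw [← R.actR_mul, inv_mul_cancel, R.actR_one]

lemma actR_actR_inv (w : W) (a : AffLat n) : R.actR w (R.actR w⁻¹ a) = a := by
  rw [← R.actR_mul, mul_inv_cancel, R.actR_one]

lemma actC_actC_inv (w : W) (b : AffLat n) : R.actC w (R.actC w⁻¹ b) = b := by
  rw [← R.actC_mul, mul_inv_cancel, R.actC_one]

lemma actR_simple_simpleVec (i : Fin (n + 1)) :
    R.actR (R.cs.simple i) (simpleVec i) = -simpleVec i := by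
  rw [R.actR_simple_eq, R.pairing_simpleVec_simpleVec, two_smul, sub_add_cancel_left]

lemma actC_simple_simpleVec (i : Fin (n + 1)) :
    R.actC (R.cs.simple i) (simpleVec i) = -simpleVec i := by
  rw [R.actC_simple_eq, R.pairing_simpleVec_simpleVec, two_smul, sub_add_cancel_left]

lemma refl_actR_simple (i : Fin (n + 1)) (a : AffLat n) :
    R.refl (R.actR (R.cs.simple i) a) = R.cs.simple i * R.refl a * R.cs.simple i := by
  rw [R.refl_act, R.cs.inv_simple]

lemma coroot_actR_simple (i : Fin (n + 1)) (a : AffLat n) :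
    R.coroot (R.actR (R.cs.simple i) a)
      = R.coroot a - R.pairing (simpleVec i) (R.coroot a) • simpleVec i := by
  rw [R.coroot_act, R.actC_simple_eq]

lemma htv_coroot_actR_simple (i : Fin (n + 1)) (a : AffLat n) :
    htv (R.coroot (R.actR (R.cs.simple i) a))
      = htv (R.coroot a) - R.pairing (simpleVec i) (R.coroot a) := by
  rw [coroot_actR_simple, htv_sub, htv_smul, htv_simpleVec, mul_one]

def IsRealRoot (a : AffLat n) : Prop := ∃ w i, a = R.actR w (simpleVec i)

variable {R}

lemma isRealRoot_simpleVec (i : Fin (n + 1)) : R.IsRealRoot (simpleVec i) :=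
  ⟨1, i, (R.actR_one _).symm⟩

lemma IsRealRoot.actR {a : AffLat n} (h : R.IsRealRoot a) (w : W) :
    R.IsRealRoot (R.actR w a) := by
  obtain ⟨u, i, rfl⟩ := h
  exact ⟨w * u, i, (R.actR_mul w u _).symm⟩

lemma IsRealRoot.isReflection_refl {a : AffLat n} (h : R.IsRealRoot a) :
    R.cs.IsReflection (R.refl a) := by
  obtain ⟨w, i, rfl⟩ := h
  rw [R.refl_act, R.refl_simple]
  exact ⟨w, i, rfl⟩

lemma IsRealRoot.refl_mul_self {a : AffLat n} (h : R.IsRealRoot a) :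
    R.refl a * R.refl a = 1 :=
  h.isReflection_refl.mul_self

lemma IsRealRoot.one_le_length_refl {a : AffLat n} (h : R.IsRealRoot a) :
    1 ≤ R.cs.length (R.refl a) :=
  h.isReflection_refl.odd_length.pos

lemma IsRealRoot.refl_ne_one {a : AffLat n} (h : R.IsRealRoot a) : R.refl a ≠ 1 := by
  intro h1
  simpa [h1] using h.one_le_length_refl

lemma IsRealRoot.actR_refl_self {a : AffLat n} (h : R.IsRealRoot a) :
    R.actR (R.refl a) a = -a := by
  obtain ⟨w, i, rfl⟩ := h
  rw [R.refl_act, R.refl_simple, R.actR_mul, R.actR_mul, R.actR_inv_actR,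
    R.actR_simple_simpleVec, R.actR_neg]

lemma IsRealRoot.neg {a : AffLat n} (h : R.IsRealRoot a) : R.IsRealRoot (-a) :=
  h.actR_refl_self ▸ h.actR (R.refl a)

lemma IsRealRoot.coroot_neg {a : AffLat n} (h : R.IsRealRoot a) :
    R.coroot (-a) = -R.coroot a := by
  obtain ⟨w, i, rfl⟩ := h
  rw [← R.actR_neg, ← R.actR_simple_simpleVec, ← R.actR_mul, R.coroot_act, R.coroot_act,
    R.coroot_simple, R.actC_mul, R.actC_simple_simpleVec, R.actC_neg]

lemma IsRealRoot.pairing_coroot_self {a : AffLat n} (h : R.IsRealRoot a) :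
    R.pairing a (R.coroot a) = 2 := by
  obtain ⟨w, i, rfl⟩ := h
  rw [R.coroot_act, R.coroot_simple, R.pairing_act, R.pairing_simpleVec_simpleVec]

lemma IsRealRoot.coroot_ne_zero {a : AffLat n} (h : R.IsRealRoot a) : R.coroot a ≠ 0 := by
  intro h0
  simpa [h0, R.pairing_zero_right] using h.pairing_coroot_self

lemma IsRealRoot.actR_refl {a : AffLat n} (h : R.IsRealRoot a) (x : AffLat n) :
    R.actR (R.refl a) x = x - R.pairing x (R.coroot a) • a := by
  obtain ⟨w, i, rfl⟩ := h
  rw [R.refl_act, R.refl_simple, R.actR_mul, R.actR_mul, R.actR_simple_eq, R.actR_sub,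
    R.actR_actR_inv, R.actR_zsmul, R.coroot_act, R.coroot_simple,
    ← R.pairing_act w, R.actR_actR_inv]

lemma IsRealRoot.actC_refl {a : AffLat n} (h : R.IsRealRoot a) (y : AffLat n) :
    R.actC (R.refl a) y = y - R.pairing a y • R.coroot a := by
  obtain ⟨w, i, rfl⟩ := h
  rw [R.refl_act, R.refl_simple, R.actC_mul, R.actC_mul, R.actC_simple_eq, R.actC_sub,
    R.actC_actC_inv, R.actC_zsmul, R.coroot_act, R.coroot_simple,
    ← R.pairing_act w, R.actC_actC_inv]

lemma IsRealRoot.refl_actR_refl {a : AffLat n} (h : R.IsRealRoot a) (x : AffLat n) :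
    R.refl (R.actR (R.refl a) x) = R.refl a * R.refl x * R.refl a := by
  rw [R.refl_act, h.isReflection_refl.inv]

lemma IsRealRoot.coroot_actR_refl {a : AffLat n} (h : R.IsRealRoot a) (x : AffLat n) :
    R.coroot (R.actR (R.refl a) x) = R.coroot x - R.pairing a (R.coroot x) • R.coroot a := by
  rw [R.coroot_act, h.actC_refl]

lemma IsPosRoot.isRealRoot {a : AffLat n} (hp : R.IsPosRoot a) : R.IsRealRoot a := hp.1

lemma IsRealRoot.nonneg_or_nonpos {x : AffLat n} (h : R.IsRealRoot x) : 0 ≤ x ∨ x ≤ 0 := by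
  obtain ⟨w, i, rfl⟩ := h
  have hw := R.length_refl_lt_iff _ (isRealRoot_simpleVec i) (simpleVec_nonneg i) w
  have hws := R.length_refl_lt_iff _ (isRealRoot_simpleVec i) (simpleVec_nonneg i)
    (w * R.cs.simple i)
  rw [R.refl_simple] at hw hws
  rw [R.cs.simple_mul_simple_cancel_right, R.actR_mul, R.actR_simple_simpleVec, R.actR_neg,
    neg_nonpos] at hws
  have := R.cs.length_mul_simple_ne w i
  by_contra hc
  rw [not_or, ← hw, ← hws] at hc
  omega

lemma IsRealRoot.nonneg_of_apply_pos {x : AffLat n} (h : R.IsRealRoot x) {j : Fin (n + 1)}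
    (hj : 0 < x j) : 0 ≤ x :=
  h.nonneg_or_nonpos.resolve_right fun hx => (hx j).not_gt hj

lemma IsRealRoot.nonpos_of_apply_neg {x : AffLat n} (h : R.IsRealRoot x) {j : Fin (n + 1)}
    (hj : x j < 0) : x ≤ 0 :=
  h.nonneg_or_nonpos.resolve_left fun hx => (hx j).not_gt hj

lemma isUnit_of_isRealRoot_smul {m : ℤ} {x : AffLat n} (h : R.IsRealRoot (m • x)) :
    IsUnit m := by
  obtain ⟨w, i, hw⟩ := h
  have hi := congrFun (congrArg (R.actR w⁻¹) hw) i
  simp only [R.actR_zsmul, R.actR_inv_actR, Pi.smul_apply, smul_eq_mul,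
    simpleVec_apply_self] at hi
  exact IsUnit.of_mul_eq_one _ hi

lemma IsPosRoot.exists_ne_one_le_apply {a : AffLat n} (hp : R.IsPosRoot a) {i : Fin (n + 1)}
    (hne : a ≠ simpleVec i) : ∃ j ≠ i, 1 ≤ a j := by
  by_contra! hsupp
  have ha : a = a i • simpleVec i := by
    funext j
    by_cases hj : j = i
    · rw [hj, Pi.smul_apply, simpleVec_apply_self, smul_eq_mul, mul_one]
    · have := hp.2 j
      have := hsupp j hj
      rw [Pi.smul_apply, simpleVec_apply_of_ne hj, smul_zero]
      simp only [Pi.zero_apply] at *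
      omega
  rcases Int.isUnit_iff.mp (isUnit_of_isRealRoot_smul (ha ▸ hp.isRealRoot)) with h1 | h1
  · exact hne (by rw [ha, h1, one_smul])
  · have := hp.2 i
    simp only [Pi.zero_apply] at this
    omega

lemma IsPosRoot.isRightDescent_refl_iff {a : AffLat n} (hp : R.IsPosRoot a) (i : Fin (n + 1)) :
    R.cs.IsRightDescent (R.refl a) i ↔ 1 ≤ R.pairing (simpleVec i) (R.coroot a) := by
  have hx := hp.isRealRoot.actR_refl (simpleVec i)
  rw [CoxeterSystem.IsRightDescent, ← R.refl_simple,
    R.length_refl_lt_iff _ (isRealRoot_simpleVec i) (simpleVec_nonneg i)]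
  constructor
  · intro h
    have hi := h i
    have := hp.2 i
    rw [hx] at hi
    simp only [Pi.sub_apply, Pi.smul_apply, simpleVec_apply_self, smul_eq_mul,
      Pi.zero_apply] at hi this
    by_contra! hc
    nlinarith
  · intro hc
    by_cases ha : a = simpleVec i
    · rw [ha, R.refl_simple, R.actR_simple_simpleVec]
      exact neg_nonpos.mpr (simpleVec_nonneg i)
    · obtain ⟨j, hji, hj⟩ := hp.exists_ne_one_le_apply ha
      refine ((isRealRoot_simpleVec i).actR _).nonpos_of_apply_neg (j := j) ?_
      rw [hx]
      simp only [Pi.sub_apply, Pi.smul_apply, simpleVec_apply_of_ne hji, smul_eq_mul]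
      nlinarith

lemma IsPosRoot.exists_one_le_pairing_simpleVec {a : AffLat n} (hp : R.IsPosRoot a) :
    ∃ i, 1 ≤ R.pairing (simpleVec i) (R.coroot a) :=
  (R.cs.exists_rightDescent_of_ne_one hp.isRealRoot.refl_ne_one).imp fun i =>
    (hp.isRightDescent_refl_iff i).mp

lemma IsPosRoot.actR_simple {a : AffLat n} (hp : R.IsPosRoot a) {i : Fin (n + 1)}
    (hne : a ≠ simpleVec i) : R.IsPosRoot (R.actR (R.cs.simple i) a) := by
  obtain ⟨j, hji, hj⟩ := hp.exists_ne_one_le_apply hne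
  refine ⟨hp.isRealRoot.actR _, (hp.isRealRoot.actR _).nonneg_of_apply_pos (j := j) ?_⟩
  simp only [R.actR_simple_eq, Pi.sub_apply, Pi.smul_apply, simpleVec_apply_of_ne hji,
    smul_zero, sub_zero]
  omega

lemma IsPosRoot.length_refl_actR_simple {a : AffLat n} (hp : R.IsPosRoot a)
    {i : Fin (n + 1)} (hne : a ≠ simpleVec i)
    (hc : 1 ≤ R.pairing (simpleVec i) (R.coroot a)) :
    R.cs.length (R.refl (R.actR (R.cs.simple i) a)) + 2 = R.cs.length (R.refl a) := by
  have hd : R.cs.IsLeftDescent (R.refl a) i :=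
    hp.isRealRoot.isReflection_refl.isLeftDescent_iff.mpr ((hp.isRightDescent_refl_iff i).mpr hc)
  have hnd : ¬ R.cs.IsRightDescent (R.refl (R.actR (R.cs.simple i) a)) i := by
    rw [(hp.actR_simple hne).isRightDescent_refl_iff, coroot_actR_simple, R.pairing_sub_right,
      R.pairing_smul_right, R.pairing_simpleVec_simpleVec]
    omega
  rw [R.cs.not_isRightDescent_iff, refl_actR_simple, R.cs.simple_mul_simple_cancel_right] at hnd
  rw [R.cs.isLeftDescent_iff] at hd
  rw [refl_actR_simple]
  omega

theorem IsPosRoot.coroot_nonneg_and_length_refl_le {a : AffLat n} (hp : R.IsPosRoot a) :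
    0 ≤ R.coroot a ∧ (R.cs.length (R.refl a) : ℤ) ≤ 2 * htv (R.coroot a) - 1 := by
  induction hN : R.cs.length (R.refl a) using Nat.strong_induction_on generalizing a with
  | _ N ih =>
  by_cases hs : ∃ i, a = simpleVec i
  · obtain ⟨i, rfl⟩ := hs
    rw [← hN, R.coroot_simple, R.refl_simple, R.cs.length_simple, htv_simpleVec]
    exact ⟨simpleVec_nonneg i, by norm_num⟩
  simp only [not_exists] at hs
  obtain ⟨i, hc⟩ := hp.exists_one_le_pairing_simpleVec
  have hlen := hp.length_refl_actR_simple (hs i) hc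
  obtain ⟨hnn, hle⟩ := ih _ (by omega) (hp.actR_simple (hs i)) rfl
  rw [coroot_actR_simple, sub_nonneg] at hnn
  rw [htv_coroot_actR_simple] at hle
  exact ⟨(smul_nonneg (by omega) (simpleVec_nonneg i)).trans hnn, by omega⟩

lemma IsPosRoot.coroot_nonneg {a : AffLat n} (hp : R.IsPosRoot a) : 0 ≤ R.coroot a :=
  hp.coroot_nonneg_and_length_refl_le.1

lemma IsPosRoot.length_refl_le {a : AffLat n} (hp : R.IsPosRoot a) :
    (R.cs.length (R.refl a) : ℤ) ≤ 2 * htv (R.coroot a) - 1 :=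
  hp.coroot_nonneg_and_length_refl_le.2

lemma IsPosRoot.one_le_htv_coroot {a : AffLat n} (hp : R.IsPosRoot a) :
    1 ≤ htv (R.coroot a) := by
  have := hp.length_refl_le
  have := hp.isRealRoot.one_le_length_refl
  omega

lemma IsRealRoot.coroot_nonpos {x : AffLat n} (h : R.IsRealRoot x) (hx : x ≤ 0) :
    R.coroot x ≤ 0 := by
  have := (show R.IsPosRoot (-x) from ⟨h.neg, neg_nonneg.mpr hx⟩).coroot_nonneg
  rwa [h.coroot_neg, neg_nonneg] at this

lemma IsRealRoot.nonneg_of_coroot_nonneg {x : AffLat n} (h : R.IsRealRoot x)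
    (hc : 0 ≤ R.coroot x) : 0 ≤ x :=
  h.nonneg_or_nonpos.resolve_right fun hx =>
    h.coroot_ne_zero (le_antisymm (h.coroot_nonpos hx) hc)

lemma IsRealRoot.pairing_coroot_eq_zero_symm {a b : AffLat n} (hb : R.IsRealRoot b)
    (h : R.pairing a (R.coroot b) = 0) : R.pairing b (R.coroot a) = 0 := by
  have hfix : R.actR (R.refl b) a = a := by rw [hb.actR_refl, h, zero_smul, sub_zero]
  have hcor := hb.coroot_actR_refl a
  rw [hfix, eq_comm, sub_eq_self, smul_eq_zero] at hcor
  exact hcor.resolve_right hb.coroot_ne_zero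

lemma IsRealRoot.actR_refl_mul_refl {x y : AffLat n} (hx : R.IsRealRoot x)
    (hy : R.IsRealRoot y) (h : R.coroot x = R.coroot y) (z : AffLat n) :
    R.actR (R.refl x * R.refl y) z = z - R.pairing z (R.coroot x) • (y - x) := by
  have hyx : R.pairing y (R.coroot x) = 2 := h ▸ hy.pairing_coroot_self
  rw [R.actR_mul, hy.actR_refl, hx.actR_refl, ← h, R.pairing_sub_left, R.pairing_smul_left, hyx]
  module

lemma IsRealRoot.actC_refl_mul_refl_coroot {x y : AffLat n} (hx : R.IsRealRoot x)
    (hy : R.IsRealRoot y) (h : R.coroot x = R.coroot y) :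
    R.actC (R.refl x * R.refl y) (R.coroot x) = R.coroot x := by
  have hyx : R.pairing y (R.coroot x) = 2 := h ▸ hy.pairing_coroot_self
  rw [R.actC_mul, hy.actC_refl, hx.actC_refl, ← h, hyx, R.pairing_sub_right,
    R.pairing_smul_right, hx.pairing_coroot_self]
  module

/-- `s_x s_y` fixes `x∨` and sends a root `z` with `z∨ = x∨` to `z + 2 (x - y)`, so every
`x - 2N (y - x)` is a positive root. -/
lemma IsPosRoot.le_of_coroot_eq {x y : AffLat n} (hx : R.IsPosRoot x) (hy : R.IsPosRoot y)
    (h : R.coroot x = R.coroot y) : y ≤ x := by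
  have hroot : ∀ N : ℕ, R.IsRealRoot (x - (2 * N : ℤ) • (y - x))
      ∧ R.coroot (x - (2 * N : ℤ) • (y - x)) = R.coroot x := by
    intro N
    induction N with
    | zero => simpa using hx.isRealRoot
    | succ N ih =>
      obtain ⟨hr, hc⟩ := ih
      have e : x - (2 * (N + 1 : ℕ) : ℤ) • (y - x)
          = R.actR (R.refl x * R.refl y) (x - (2 * N : ℤ) • (y - x)) := by
        rw [hx.isRealRoot.actR_refl_mul_refl hy.isRealRoot h, ← hc, hr.pairing_coroot_self]
        push_cast
        module
      rw [e, R.coroot_act, hc, hx.isRealRoot.actC_refl_mul_refl_coroot hy.isRealRoot h]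
      exact ⟨hr.actR _, rfl⟩
  intro j
  have hj := hx.2 j
  obtain ⟨hr, hc⟩ := hroot ((x j).toNat + 1)
  have hpos := hr.nonneg_of_coroot_nonneg (hc ▸ hx.coroot_nonneg) j
  simp only [Pi.zero_apply, Pi.sub_apply, Pi.smul_apply, smul_eq_mul] at hj hpos
  push_cast [Int.toNat_of_nonneg hj] at hpos
  by_contra! hlt
  nlinarith [mul_nonneg (show 0 ≤ y j - x j - 1 by linarith) (show 0 ≤ x j + 1 by omega)]

theorem coroot_injOn : Set.InjOn R.coroot {a | R.IsPosRoot a} := fun _ hx _ hy h =>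
  le_antisymm (IsPosRoot.le_of_coroot_eq hy hx h.symm) (IsPosRoot.le_of_coroot_eq hx hy h)

lemma IsRealRoot.length_refl_mul_refl_comm {a b : AffLat n} (ha : R.IsRealRoot a)
    (hb : R.IsRealRoot b) :
    R.cs.length (R.refl b * R.refl a) = R.cs.length (R.refl a * R.refl b) := by
  rw [← R.cs.length_inv (R.refl a * R.refl b), mul_inv_rev, ha.isReflection_refl.inv,
    hb.isReflection_refl.inv]

lemma IsPosRoot.pairing_simpleVec_coroot_nonpos {a b : AffLat n} (ha : R.IsPosRoot a)
    (hb : R.IsPosRoot b)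
    (hlen : R.cs.length (R.refl a * R.refl b) = R.cs.length (R.refl a) + R.cs.length (R.refl b))
    {i : Fin (n + 1)} (hia : 1 ≤ R.pairing (simpleVec i) (R.coroot a)) :
    R.pairing (simpleVec i) (R.coroot b) ≤ 0 := by
  by_contra! hib
  have := R.cs.length_mul_lt_of_isRightDescent_of_isLeftDescent
    ((ha.isRightDescent_refl_iff i).mpr hia)
    (hb.isRealRoot.isReflection_refl.isLeftDescent_iff.mpr
      ((hb.isRightDescent_refl_iff i).mpr hib))
  omega

lemma IsPosRoot.length_refl_actR_simple_mul_refl {a b : AffLat n} (ha : R.IsPosRoot a)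
    {i : Fin (n + 1)} (hne : a ≠ simpleVec i) (hc : 1 ≤ R.pairing (simpleVec i) (R.coroot a))
    (hbi : R.actR (R.cs.simple i) b = b)
    (hlen : R.cs.length (R.refl a * R.refl b) = R.cs.length (R.refl a) + R.cs.length (R.refl b)) :
    R.cs.length (R.refl (R.actR (R.cs.simple i) a) * R.refl b)
      = R.cs.length (R.refl (R.actR (R.cs.simple i) a)) + R.cs.length (R.refl b) := by
  have hb : R.refl b = R.cs.simple i * R.refl b * R.cs.simple i := by
    rw [← refl_actR_simple, hbi]
  have hconj : R.refl (R.actR (R.cs.simple i) a) * R.refl b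
      = R.cs.simple i * (R.refl a * R.refl b) * R.cs.simple i := by
    rw [refl_actR_simple]
    nth_rewrite 1 [hb]
    simp [mul_assoc]
  have h1 := R.cs.length_le_length_simple_mul_mul_simple_add_two (R.refl a * R.refl b) i
  have h2 := R.cs.length_mul_le (R.refl (R.actR (R.cs.simple i) a)) (R.refl b)
  have h3 := ha.length_refl_actR_simple hne hc
  rw [← hconj] at h1
  omega

lemma IsChevalleyRoot.isPosRoot {a : AffLat n} (h : R.IsChevalleyRoot a) : R.IsPosRoot a := h.1

lemma IsChevalleyRoot.isRealRoot {a : AffLat n} (h : R.IsChevalleyRoot a) : R.IsRealRoot a :=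
  h.1.1

lemma IsChevalleyRoot.pairing_simpleVec_coroot_le_one {a : AffLat n}
    (ha : R.IsChevalleyRoot a) {i : Fin (n + 1)} (hne : a ≠ simpleVec i) :
    R.pairing (simpleVec i) (R.coroot a) ≤ 1 := by
  by_contra! hc
  have hlen := ha.isPosRoot.length_refl_actR_simple hne hc.le
  have hle := (ha.isPosRoot.actR_simple hne).length_refl_le
  rw [htv_coroot_actR_simple] at hle
  have := ha.2
  omega

lemma IsPosRoot.isChevalleyRoot_actR_simple_iff {a : AffLat n} (hp : R.IsPosRoot a)
    {i : Fin (n + 1)} (hne : a ≠ simpleVec i) (h1 : R.pairing (simpleVec i) (R.coroot a) = 1) :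
    R.IsChevalleyRoot (R.actR (R.cs.simple i) a) ↔ R.IsChevalleyRoot a := by
  have hlen := hp.length_refl_actR_simple hne h1.ge
  have hht := R.htv_coroot_actR_simple i a
  rw [IsChevalleyRoot, IsChevalleyRoot, and_iff_right (hp.actR_simple hne), and_iff_right hp]
  omega

lemma IsChevalleyRoot.pairing_coroot_le_one {p g : AffLat n} (hp : R.IsChevalleyRoot p)
    (hg : R.IsChevalleyRoot g) (hpos : 0 ≤ R.actR (R.refl p) g) :
    R.pairing p (R.coroot g) ≤ 1 := by
  have hg' : R.IsPosRoot (R.actR (R.refl p) g) := ⟨hg.isRealRoot.actR _, hpos⟩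
  have hconj : R.refl p * R.refl (R.actR (R.refl p) g) * R.refl p = R.refl g := by
    rw [hp.isRealRoot.refl_actR_refl]
    simp only [← mul_assoc, hp.isRealRoot.refl_mul_self, one_mul]
    rw [mul_assoc, hp.isRealRoot.refl_mul_self, mul_one]
  have hlen := R.cs.length_mul_mul_le (R.refl p) (R.refl (R.actR (R.refl p) g)) (R.refl p)
  rw [hconj] at hlen
  have hle := hg'.length_refl_le
  rw [hp.isRealRoot.coroot_actR_refl, htv_sub, htv_smul] at hle
  have := hp.2
  have := hg.2
  have := hp.isPosRoot.one_le_htv_coroot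
  nlinarith

lemma IsChevalleyRoot.coroot_le_two_smul_coroot {p g : AffLat n} (hp : R.IsChevalleyRoot p)
    (hg : R.IsChevalleyRoot g) (h2 : R.pairing p (R.coroot g) = 2) :
    R.coroot g ≤ (2 : ℤ) • R.coroot p := by
  have hneg := (hg.isRealRoot.actR (R.refl p)).nonneg_or_nonpos.resolve_left
    fun h => by linarith [hp.pairing_coroot_le_one hg h]
  have := (hg.isRealRoot.actR _).coroot_nonpos hneg
  rwa [hp.isRealRoot.coroot_actR_refl, h2, sub_nonpos] at this

theorem not_isChevalleyRoot_of_pairing_eq_zero {a b g : AffLat n}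
    (ha : R.IsChevalleyRoot a) (hb : R.IsChevalleyRoot b)
    (hlen : R.cs.length (R.refl a * R.refl b) = R.cs.length (R.refl a) + R.cs.length (R.refl b))
    (hcor : R.coroot g = R.coroot a + R.coroot b) (hk : R.pairing a (R.coroot b) = 0) :
    ¬ R.IsChevalleyRoot g := by
  intro hqg
  have hra := ha.isRealRoot
  have hrb := hb.isRealRoot
  have hag : R.pairing a (R.coroot g) = 2 := by
    rw [hcor, R.pairing_add_right, hra.pairing_coroot_self, hk, add_zero]
  have hbg : R.pairing b (R.coroot g) = 2 := by
    rw [hcor, R.pairing_add_right, hrb.pairing_coroot_self, hrb.pairing_coroot_eq_zero_symm hk,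
      zero_add]
  have hba := ha.coroot_le_two_smul_coroot hqg hag
  have hab := hb.coroot_le_two_smul_coroot hqg hbg
  rw [hcor, two_smul, add_le_add_iff_left] at hba
  rw [hcor, two_smul, add_le_add_iff_right] at hab
  have heq : a = b := R.coroot_injOn ha.isPosRoot hb.isPosRoot (le_antisymm hab hba)
  rw [heq, hrb.refl_mul_self, R.cs.length_one] at hlen
  have := hrb.one_le_length_refl
  omega

lemma IsPosRoot.ne_simpleVec_of_coroot_eq_add {a b g : AffLat n} (hg : R.IsPosRoot g)
    (ha : R.IsPosRoot a) (hb : R.IsPosRoot b) (hcor : R.coroot g = R.coroot a + R.coroot b)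
    (i : Fin (n + 1)) : g ≠ simpleVec i := by
  rintro rfl
  have hht := congrArg htv hcor
  rw [R.coroot_simple, htv_simpleVec, htv_add] at hht
  have := ha.one_le_htv_coroot
  have := hb.one_le_htv_coroot
  omega

lemma IsChevalleyRoot.of_coroot_eq_simpleVec_add {b g : AffLat n} (hb : R.IsChevalleyRoot b)
    (hg : R.IsPosRoot g) {i : Fin (n + 1)} (hcor : R.coroot g = simpleVec i + R.coroot b)
    (hg1 : R.pairing (simpleVec i) (R.coroot g) = 1) : R.IsChevalleyRoot g := by
  have hgi := hg.ne_simpleVec_of_coroot_eq_add ⟨isRealRoot_simpleVec i, simpleVec_nonneg i⟩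
    hb.isPosRoot (by rwa [R.coroot_simple]) i
  have hgb : R.actR (R.cs.simple i) g = b := R.coroot_injOn (hg.actR_simple hgi) hb.isPosRoot
    (by rw [coroot_actR_simple, hg1, hcor, one_smul, add_sub_cancel_left])
  exact (hg.isChevalleyRoot_actR_simple_iff hgi hg1).mp (hgb ▸ hb)

theorem isChevalleyRoot_of_pairing_ne_zero {a b g : AffLat n}
    (ha : R.IsChevalleyRoot a) (hb : R.IsChevalleyRoot b)
    (hlen : R.cs.length (R.refl a * R.refl b) = R.cs.length (R.refl a) + R.cs.length (R.refl b))
    (hg : R.IsPosRoot g) (hcor : R.coroot g = R.coroot a + R.coroot b)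
    (hk : R.pairing a (R.coroot b) ≠ 0) : R.IsChevalleyRoot g := by
  induction hN : R.cs.length (R.refl a) + R.cs.length (R.refl b) using Nat.strong_induction_on
    generalizing a b g with
  | _ N ih =>
  obtain ⟨i, hig⟩ := hg.exists_one_le_pairing_simpleVec
  have hcg : R.pairing (simpleVec i) (R.coroot g)
      = R.pairing (simpleVec i) (R.coroot a) + R.pairing (simpleVec i) (R.coroot b) := by
    rw [hcor, R.pairing_add_right]
  wlog hia : 1 ≤ R.pairing (simpleVec i) (R.coroot a) generalizing a b
  · exact this hb ha (by rw [ha.isRealRoot.length_refl_mul_refl_comm hb.isRealRoot]; omega)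
      (hcor.trans (add_comm _ _)) (fun h => hk (ha.isRealRoot.pairing_coroot_eq_zero_symm h))
      (by omega) (by omega) (by omega)
  have hib := ha.isPosRoot.pairing_simpleVec_coroot_nonpos hb.isPosRoot hlen hia
  by_cases hai : a = simpleVec i
  · subst hai
    rw [R.coroot_simple] at hcor hcg
    rw [R.pairing_simpleVec_simpleVec] at hcg
    exact hb.of_coroot_eq_simpleVec_add hg hcor (by omega)
  have hgi := hg.ne_simpleVec_of_coroot_eq_add ha.isPosRoot hb.isPosRoot hcor i
  have ha1 : R.pairing (simpleVec i) (R.coroot a) = 1 :=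
    le_antisymm (ha.pairing_simpleVec_coroot_le_one hai) hia
  have hb0 : R.pairing (simpleVec i) (R.coroot b) = 0 := by omega
  have hg1 : R.pairing (simpleVec i) (R.coroot g) = 1 := by omega
  have hbi : R.actR (R.cs.simple i) b = b := by
    have hbv := hb.isRealRoot.pairing_coroot_eq_zero_symm hb0
    rw [R.coroot_simple] at hbv
    rw [R.actR_simple_eq, hbv, zero_smul, sub_zero]
  have hlen' := ha.isPosRoot.length_refl_actR_simple hai hia
  refine (hg.isChevalleyRoot_actR_simple_iff hgi hg1).mp
    (ih _ (by omega) ((ha.isPosRoot.isChevalleyRoot_actR_simple_iff hai ha1).mpr ha) hb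
      (ha.isPosRoot.length_refl_actR_simple_mul_refl hai hia hbi hlen) (hg.actR_simple hgi)
      ?_ ?_ rfl)
  · rw [coroot_actR_simple, coroot_actR_simple, hg1, ha1, hcor]
    abel
  · rwa [R.actR_simple_eq, R.pairing_sub_left, R.pairing_smul_left, hb0, mul_zero, sub_zero]

end AffineRootSystem

/-- Let `α, β` be positive real affine roots with
`ℓ(s_α) = 2 ht(α∨) - 1`, `ℓ(s_β) = 2 ht(β∨) - 1` and
`ℓ(s_α s_β) = ℓ(s_α) + ℓ(s_β)`, and let `γ` be a positive real root with
`γ∨ = α∨ + β∨`.  Then `ℓ(s_γ) = 2 ht(γ∨) - 1` if and only if `⟨α, β∨⟩ ≠ 0`. -/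
theorem chevalley_sum_iff_pairing_ne_zero {n : ℕ} {W : Type*} [Group W]
    (R : AffineRootSystem n W) (a b g : AffLat n)
    (ha : R.IsChevalleyRoot a) (hb : R.IsChevalleyRoot b)
    (hlen : R.cs.length (R.refl a * R.refl b)
        = R.cs.length (R.refl a) + R.cs.length (R.refl b))
    (hg : R.IsPosRoot g) (hcor : R.coroot g = R.coroot a + R.coroot b) :
    R.IsChevalleyRoot g ↔ R.pairing a (R.coroot b) ≠ 0 :=
  ⟨fun hqg hk => R.not_isChevalleyRoot_of_pairing_eq_zero ha hb hlen hcor hk hqg,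
    R.isChevalleyRoot_of_pairing_ne_zero ha hb hlen hg hcor⟩
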